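/- arXiv:2508.10350 — 2 statements merged into one kernel-verified Lean document; each statement's English description precedes it below -/
import Mathlib

section
/- A column-stochastic matrix A (CU with C, U column-stochastic) admits unique recovery of every probability vector p from Ap if and only if rank(A) = N. -/
/-!
The columns of `A = C * U` sum to one, so every kernel vector `v` of `A` has `∑ v = 0`.
Then `v⁺` and `v⁻` have the same mass, and after normalisation they are probability vectors with
the same image under `A`; unique recovery forces `v⁺ = v⁻`, i.e. `v = 0`. Hence unique recovery
on the simplex is injectivity of `A`, which is `rank A = N`.
-/

open Function Matrix

theorem Matrix.one_vecMul_eq_one_iff {R m n : Type*} [Semiring R] [Fintype m]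
    {A : Matrix m n R} : 1 ᵥ* A = 1 ↔ ∀ j, ∑ i, A i j = 1 := by
  simp [funext_iff, vecMul, dotProduct]

theorem Matrix.sum_mulVec_of_one_vecMul_eq_one {R m n : Type*} [CommSemiring R] [Fintype m]
    [Fintype n] {A : Matrix m n R} (hA : 1 ᵥ* A = 1) (v : n → R) :
    ∑ i, (A *ᵥ v) i = ∑ j, v j := by
  rw [← one_dotProduct, dotProduct_mulVec, hA, one_dotProduct]

theorem Matrix.rank_eq_card_iff_mulVec_injective {K m n : Type*} [Field K] [Fintype m]
    [Fintype n] (A : Matrix m n K) : A.rank = Fintype.card n ↔ Injective A.mulVec := by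
  rw [rank_eq_finrank_span_cols, mulVec_injective_iff, linearIndependent_iff_card_eq_finrank_span,
    Set.finrank, eq_comm]

section

variable {𝕜 ι : Type*} [Field 𝕜] [LinearOrder 𝕜] [IsStrictOrderedRing 𝕜] [Fintype ι]

theorem inv_sum_smul_mem_stdSimplex {w : ι → 𝕜} (hw : 0 ≤ w) (hs : ∑ i, w i ≠ 0) :
    (∑ i, w i)⁻¹ • w ∈ stdSimplex 𝕜 ι :=
  ⟨fun i => smul_nonneg (inv_nonneg.2 (Finset.sum_nonneg fun j _ => hw j)) (hw i), by
    simp [← Finset.mul_sum, hs]⟩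

theorem LinearMap.injective_of_injOn_stdSimplex {E : Type*} [AddCommGroup E] [Module 𝕜 E]
    (f : (ι → 𝕜) →ₗ[𝕜] E) (hf : ∀ v, f v = 0 → ∑ i, v i = 0)
    (h : Set.InjOn f (stdSimplex 𝕜 ι)) : Injective f := by
  refine (injective_iff_map_eq_zero f).2 fun v hv => ?_
  have hmass : ∑ i, v⁻ i = ∑ i, v⁺ i := by
    have hv0 := hf v hv
    conv_lhs at hv0 => rw [← posPart_sub_negPart v]
    rw [Finset.sum_congr rfl fun i _ => Pi.sub_apply v⁺ v⁻ i, Finset.sum_sub_distrib] at hv0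
    exact (sub_eq_zero.1 hv0).symm
  rw [← posPart_sub_negPart v, sub_eq_zero]
  rcases eq_or_ne (∑ i, v⁺ i) 0 with hs | hs
  · rw [(Fintype.sum_eq_zero_iff_of_nonneg (posPart_nonneg v)).1 hs,
      (Fintype.sum_eq_zero_iff_of_nonneg (negPart_nonneg v)).1 (hmass.trans hs)]
  · have hnorm := h (inv_sum_smul_mem_stdSimplex (posPart_nonneg v) hs)
      (hmass ▸ inv_sum_smul_mem_stdSimplex (negPart_nonneg v) (hmass ▸ hs))
      (by rw [map_smul, map_smul, ← sub_eq_zero, ← smul_sub, ← map_sub,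
        posPart_sub_negPart, hv, smul_zero])
    exact smul_right_injective _ (inv_ne_zero hs) (hmass ▸ hnorm)

end

theorem learnable_iff_full_rank_general
    (M N : ℕ)
    (C : Matrix (Fin M) (Fin M) ℝ) (U : Matrix (Fin M) (Fin N) ℝ)
    (hC1 : ∀ j, ∑ i, C i j = 1)
    (hU1 : ∀ j, ∑ i, U i j = 1)
    (A : Matrix (Fin M) (Fin N) ℝ) (hA : A = C * U) :
    (∀ p1 p2 : Fin N → ℝ,
      (∀ n, 0 ≤ p1 n) → (∑ n, p1 n = 1) →
      (∀ n, 0 ≤ p2 n) → (∑ n, p2 n = 1) →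
      A.mulVec p1 = A.mulVec p2 → p1 = p2) ↔ A.rank = N := by
  have hA1 : 1 ᵥ* A = 1 := by
    rw [hA, ← vecMul_vecMul, one_vecMul_eq_one_iff.2 hC1, one_vecMul_eq_one_iff.2 hU1]
  have hker (v : Fin N → ℝ) (hv : A.mulVecLin v = 0) : ∑ n, v n = 0 := by
    rw [← sum_mulVec_of_one_vecMul_eq_one hA1 v, show A *ᵥ v = 0 from hv]
    simp
  have hrank : A.rank = N ↔ Injective A.mulVec := by
    simpa using A.rank_eq_card_iff_mulVec_injective
  rw [hrank]
  constructor
  · intro h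
    exact A.mulVecLin.injective_of_injOn_stdSimplex hker
      fun p1 hp1 p2 hp2 => h p1 p2 hp1.1 hp1.2 hp2.1 hp2.2
  · exact fun h p1 p2 _ _ _ _ hp => h hp

/-- Theorem 1 (learnability): for A = CU with C, U column-stochastic, every
probability vector p is uniquely recoverable from A p iff rank(A) = N. -/
theorem learnable_iff_full_rank
    (M N : ℕ)
    (C : Matrix (Fin M) (Fin M) ℝ) (U : Matrix (Fin M) (Fin N) ℝ)
    (hC0 : ∀ i j, 0 ≤ C i j) (hC1 : ∀ j, ∑ i, C i j = 1)
    (hU0 : ∀ i j, 0 ≤ U i j) (hU1 : ∀ j, ∑ i, U i j = 1)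
    (A : Matrix (Fin M) (Fin N) ℝ) (hA : A = C * U) :
    (∀ p1 p2 : Fin N → ℝ,
      (∀ n, 0 ≤ p1 n) → (∑ n, p1 n = 1) →
      (∀ n, 0 ≤ p2 n) → (∑ n, p2 n = 1) →
      A.mulVec p1 = A.mulVec p2 → p1 = p2) ↔ A.rank = N :=
  learnable_iff_full_rank_general M N C U hC1 hU1 A hA
end

section
/- Under the setup of Theorems 2 and 3, the expected semantic distortion gap satisfies E[D_{p̂_T} − D_p] ≤ d_max √(NM) / (σ_min(A) √T), where D_q denotes the expected distortion of the Bayes decoder designed for prior q and evaluated under true prior p. -/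
/-!
A decoder that is Bayes-optimal for a prior `r` loses against any other decoder, under the true
prior `p`, at most `d_max ‖r - p‖₁`: it wins under `r`, and passing from `r` to `p` changes each
posterior risk by at most `d_max` times the prior mismatch. With `r = p̂_T = A† q̂_T` and `p = A† q`
we have `σ ‖p̂_T - p‖₂ ≤ ‖A A† (q̂_T - q)‖₂ ≤ ‖q̂_T - q‖₂`, the middle operator being an orthogonal
projection. Each coordinate of `q̂_T` is a mean of `T` independent indicators, so
`E ‖q̂_T - q‖₂² ≤ M / (4T)`, and Jensen's inequality for the square root finishes the bound.
-/

open MeasureTheory ProbabilityTheory Matrix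

namespace Matrix

theorem mul_apply_nonneg {l m n : Type*} [Fintype m] {C : Matrix l m ℝ} {U : Matrix m n ℝ}
    (hC : ∀ i j, 0 ≤ C i j) (hU : ∀ i j, 0 ≤ U i j) (i : l) (j : n) : 0 ≤ (C * U) i j :=
  Finset.sum_nonneg fun k _ => mul_nonneg (hC i k) (hU k j)

theorem sum_mul_apply_eq_one {l m n : Type*} [Fintype l] [Fintype m] {C : Matrix l m ℝ}
    {U : Matrix m n ℝ} (hC : ∀ j, ∑ i, C i j = 1) (hU : ∀ j, ∑ i, U i j = 1) (j : n) :
    ∑ i, (C * U) i j = 1 := by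
  simp only [mul_apply]
  rw [Finset.sum_comm]
  simp only [← Finset.sum_mul, hC, one_mul, hU]

variable {ι κ R : Type*} [Fintype ι]

theorem mulVec_nonneg {A : Matrix κ ι ℝ} {x : ι → ℝ} (hA : ∀ i j, 0 ≤ A i j) (hx : ∀ j, 0 ≤ x j)
    (i : κ) : 0 ≤ (A *ᵥ x) i :=
  Finset.sum_nonneg fun j _ => mul_nonneg (hA i j) (hx j)

variable [Fintype κ]

theorem mulVec_dotProduct [CommSemiring R] (A : Matrix κ ι R) (x : ι → R) (u : κ → R) :
    (A *ᵥ x) ⬝ᵥ u = x ⬝ᵥ (Aᵀ *ᵥ u) := by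
  rw [← vecMul_transpose, dotProduct_mulVec]

variable [DecidableEq ι]

theorem isUnit_of_rank_eq_card [Field R] {A : Matrix ι ι R} (h : A.rank = Fintype.card ι) :
    IsUnit A := by
  rw [← mulVec_surjective_iff_isUnit, ← coe_mulVecLin, ← LinearMap.range_eq_top]
  exact Submodule.eq_top_of_finrank_eq (by simpa [rank] using h)

theorem isUnit_transpose_mul_self_of_rank_eq_card {A : Matrix κ ι ℝ}
    (h : A.rank = Fintype.card ι) : IsUnit (Aᵀ * A) :=
  isUnit_of_rank_eq_card (by rw [rank_transpose_mul_self, h])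

theorem pinv_mul_self [CommRing R] {A : Matrix κ ι R} (hA : IsUnit (Aᵀ * A)) :
    (Aᵀ * A)⁻¹ * Aᵀ * A = 1 := by
  rw [Matrix.mul_assoc, nonsing_inv_mul _ ((isUnit_iff_isUnit_det _).mp hA)]

variable {A : Matrix κ ι ℝ}

/-- `A` times the least-squares solution of `A x = v` is the orthogonal projection of `v` onto
the range of `A`. -/
theorem dotProduct_mulVec_pinv_le (hA : IsUnit (Aᵀ * A)) (v : κ → ℝ) :
    let w := A *ᵥ (((Aᵀ * A)⁻¹ * Aᵀ) *ᵥ v)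
    w ⬝ᵥ w ≤ v ⬝ᵥ v := by
  intro w
  have hnormal : Aᵀ *ᵥ w = Aᵀ *ᵥ v := by
    rw [mulVec_mulVec, mulVec_mulVec, ← Matrix.mul_assoc,
      mul_nonsing_inv _ ((isUnit_iff_isUnit_det _).mp hA), Matrix.one_mul]
  have hw : w ⬝ᵥ v = w ⬝ᵥ w := by
    simp only [w, mulVec_dotProduct, ← hnormal]
  have := dotProduct_self_star_nonneg (v - w)
  simp only [star_trivial, sub_dotProduct, dotProduct_sub, dotProduct_comm v w, hw] at this
  linarith

theorem mul_sqrt_sum_sq_pinv_mulVec_le (hA : IsUnit (Aᵀ * A)) {σ : ℝ}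
    (hσ : ∀ x, σ * √(∑ n, x n ^ 2) ≤ √(∑ m, (A *ᵥ x) m ^ 2)) (v : κ → ℝ) :
    σ * √(∑ n, (((Aᵀ * A)⁻¹ * Aᵀ) *ᵥ v) n ^ 2) ≤ √(∑ m, v m ^ 2) :=
  (hσ _).trans <| Real.sqrt_le_sqrt <| by
    simpa only [dotProduct, sq] using dotProduct_mulVec_pinv_le hA v

end Matrix

theorem sum_abs_le_sqrt_card_mul_sqrt_sum_sq {ι : Type*} [Fintype ι] (x : ι → ℝ) :
    ∑ i, |x i| ≤ √(Fintype.card ι) * √(∑ i, x i ^ 2) := by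
  simpa [sq_abs, mul_comm] using Real.sum_mul_le_sqrt_mul_sqrt Finset.univ (fun i => |x i|) 1

section Decoding

variable {ι κ : Type*} [Fintype ι] [Fintype κ]

def expectedDistortion (p : ι → ℝ) (A : Matrix κ ι ℝ) (d : ι → ι → ℝ) (dec : κ → ι) : ℝ :=
  ∑ sh, ∑ w, p w * A sh w * d w (dec sh)

def IsBayesDecoder (r : ι → ℝ) (A : Matrix κ ι ℝ) (d : ι → ι → ℝ) (dec : κ → ι) : Prop :=
  ∀ sh wh, ∑ w, r w * A sh w * d w (dec sh) ≤ ∑ w, r w * A sh w * d w wh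

variable {A : Matrix κ ι ℝ} {d : ι → ι → ℝ} {dmax : ℝ}

theorem expectedDistortion_sub_le_of_isBayesDecoder
    (hA0 : ∀ i j, 0 ≤ A i j) (hA1 : ∀ j, ∑ i, A i j = 1)
    (hd0 : ∀ w wh, 0 ≤ d w wh) (hd1 : ∀ w wh, d w wh ≤ dmax)
    {r : ι → ℝ} {b : κ → ι} (hb : IsBayesDecoder r A d b) (p : ι → ℝ) (a : κ → ι) :
    expectedDistortion p A d b - expectedDistortion p A d a ≤ dmax * ∑ w, |r w - p w| := by
  have hosc : ∀ w x y, d w x - d w y ≤ dmax := fun w x y => by linarith [hd0 w y, hd1 w x]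
  -- `b` beats `a` under `r`, so under `p` it can only lose through the mismatch `p - r`
  have hsymbol : ∀ sh, ∑ w, p w * A sh w * d w (b sh) - ∑ w, p w * A sh w * d w (a sh)
      ≤ ∑ w, |r w - p w| * A sh w * dmax := by
    intro sh
    have hsplit : ∑ w, p w * A sh w * d w (b sh) - ∑ w, p w * A sh w * d w (a sh)
        = ∑ w, (p w - r w) * A sh w * (d w (b sh) - d w (a sh))
          + (∑ w, r w * A sh w * d w (b sh) - ∑ w, r w * A sh w * d w (a sh)) := by
      simp only [← Finset.sum_sub_distrib, ← Finset.sum_add_distrib]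
      exact Finset.sum_congr rfl fun w _ => by ring
    have hterm : ∀ w, (p w - r w) * A sh w * (d w (b sh) - d w (a sh))
        ≤ |r w - p w| * A sh w * dmax := fun w => by
      rw [abs_sub_comm, mul_right_comm, mul_right_comm |p w - r w|]
      refine mul_le_mul_of_nonneg_right ?_ (hA0 sh w)
      calc (p w - r w) * (d w (b sh) - d w (a sh))
          ≤ |p w - r w| * |d w (b sh) - d w (a sh)| := by rw [← abs_mul]; exact le_abs_self _
        _ ≤ |p w - r w| * dmax := by
          gcongr
          exact abs_sub_le_iff.mpr ⟨hosc w _ _, hosc w _ _⟩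
    linarith [Finset.sum_le_sum fun w (_ : w ∈ Finset.univ) => hterm w, hb sh (a sh)]
  calc expectedDistortion p A d b - expectedDistortion p A d a
      ≤ ∑ sh, ∑ w, |r w - p w| * A sh w * dmax := by
        rw [expectedDistortion, expectedDistortion, ← Finset.sum_sub_distrib]
        exact Finset.sum_le_sum fun sh _ => hsymbol sh
    _ = dmax * ∑ w, |r w - p w| := by
        rw [Finset.sum_comm, Finset.mul_sum]
        refine Finset.sum_congr rfl fun w _ => ?_
        rw [← Finset.sum_mul, ← Finset.mul_sum, hA1, mul_one, mul_comm]

theorem expectedDistortion_pinv_sub_le [DecidableEq ι]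
    (hA0 : ∀ i j, 0 ≤ A i j) (hA1 : ∀ j, ∑ i, A i j = 1) (hA : IsUnit (Aᵀ * A)) {σ : ℝ}
    (hσ : 0 < σ) (hσA : ∀ x, σ * √(∑ n, x n ^ 2) ≤ √(∑ m, (A *ᵥ x) m ^ 2))
    (hd0 : ∀ w wh, 0 ≤ d w wh) (hd1 : ∀ w wh, d w wh ≤ dmax) (hdmax : 0 ≤ dmax)
    {V : (ι → ℝ) → κ → ι} (hV : ∀ r, IsBayesDecoder r A d (V r)) (p : ι → ℝ) (qhat : κ → ℝ) :
    expectedDistortion p A d (V (((Aᵀ * A)⁻¹ * Aᵀ) *ᵥ qhat)) - expectedDistortion p A d (V p)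
      ≤ dmax * √(Fintype.card ι) / σ * √(∑ m, (qhat m - (A *ᵥ p) m) ^ 2) := by
  set phat := ((Aᵀ * A)⁻¹ * Aᵀ) *ᵥ qhat
  have herr : phat - p = ((Aᵀ * A)⁻¹ * Aᵀ) *ᵥ (qhat - A *ᵥ p) := by
    rw [mulVec_sub, mulVec_mulVec, pinv_mul_self hA, one_mulVec]
  have hσerr : √(∑ n, (phat n - p n) ^ 2) ≤ √(∑ m, (qhat m - (A *ᵥ p) m) ^ 2) / σ := by
    rw [le_div_iff₀ hσ, mul_comm]
    have h := mul_sqrt_sum_sq_pinv_mulVec_le hA hσA (qhat - A *ᵥ p)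
    rw [← herr] at h
    exact h
  calc expectedDistortion p A d (V phat) - expectedDistortion p A d (V p)
      ≤ dmax * ∑ n, |phat n - p n| :=
        expectedDistortion_sub_le_of_isBayesDecoder hA0 hA1 hd0 hd1 (hV phat) p (V p)
    _ ≤ dmax * (√(Fintype.card ι) * (√(∑ m, (qhat m - (A *ᵥ p) m) ^ 2) / σ)) := by
        grw [sum_abs_le_sqrt_card_mul_sqrt_sum_sq, hσerr]
    _ = dmax * √(Fintype.card ι) / σ * √(∑ m, (qhat m - (A *ᵥ p) m) ^ 2) := by ring

end Decoding

section Probability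

variable {Ω : Type*} [MeasurableSpace Ω] {μ : Measure Ω}

theorem variance_mean_le_of_pairwise_indepFun [IsProbabilityMeasure μ] {ι : Type*} [Fintype ι]
    {X : ι → Ω → ℝ} {a b : ℝ} (hX : ∀ i, AEMeasurable (X i) μ)
    (hab : ∀ i, ∀ᵐ ω ∂μ, X i ω ∈ Set.Icc a b) (hind : Pairwise fun i j => X i ⟂ᵢ[μ] X j) :
    Var[fun ω => (∑ i, X i ω) / Fintype.card ι; μ] ≤ ((b - a) / 2) ^ 2 / Fintype.card ι := by
  have hsum : Var[∑ i, X i; μ] ≤ Fintype.card ι * ((b - a) / 2) ^ 2 := by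
    rw [IndepFun.variance_sum (fun i _ => memLp_of_bounded (hab i) (hX i).aestronglyMeasurable 2)
      fun i _ j _ hij => hind hij]
    simpa using Finset.sum_le_sum fun i (_ : i ∈ Finset.univ) =>
      variance_le_sq_of_bounded (hab i) (hX i)
  have hmean : (fun ω => (∑ i, X i ω) / Fintype.card ι)
      = fun ω => (Fintype.card ι : ℝ)⁻¹ * (∑ i, X i) ω := by
    ext ω; rw [Finset.sum_apply, div_eq_inv_mul]
  rw [hmean, variance_const_mul]
  rcases (Fintype.card ι).eq_zero_or_pos with h | h
  · simp [h]
  · calc ((Fintype.card ι : ℝ)⁻¹) ^ 2 * Var[∑ i, X i; μ]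
        ≤ ((Fintype.card ι : ℝ)⁻¹) ^ 2 * (Fintype.card ι * ((b - a) / 2) ^ 2) := by gcongr
      _ = ((b - a) / 2) ^ 2 / Fintype.card ι := by field_simp

theorem MeasureTheory.Integrable.sqrt [IsFiniteMeasure μ] {f : Ω → ℝ} (hf : Integrable f μ) :
    Integrable (fun ω => √(f ω)) μ := by
  refine (hf.abs.add (integrable_const 1)).mono' hf.aemeasurable.sqrt.aestronglyMeasurable
    (ae_of_all _ fun ω => ?_)
  rw [Real.norm_of_nonneg (Real.sqrt_nonneg _), Pi.add_apply]
  calc √(f ω) ≤ √|f ω| := Real.sqrt_le_sqrt (le_abs_self _)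
    _ ≤ |f ω| + 1 := by nlinarith [Real.sq_sqrt (abs_nonneg (f ω)), Real.sqrt_nonneg |f ω|]

theorem integral_sqrt_le_sqrt_integral [IsProbabilityMeasure μ] {f : Ω → ℝ}
    (hf : Integrable f μ) (h0 : 0 ≤ᵐ[μ] f) : ∫ ω, √(f ω) ∂μ ≤ √(∫ ω, f ω ∂μ) :=
  Real.strictConcaveOn_sqrt.concaveOn.le_map_integral Real.continuous_sqrt.continuousOn
    isClosed_Ici h0 hf hf.sqrt

end Probability

section EmpiricalFrequency

variable {Ω κ : Type*} [DecidableEq κ] {T : ℕ}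

noncomputable def empiricalFreq (s : Fin T → Ω → κ) (ω : Ω) (m : κ) : ℝ :=
  (∑ t, if s t ω = m then (1 : ℝ) else 0) / T

theorem empiricalFreq_mem_Icc (s : Fin T → Ω → κ) (ω : Ω) (m : κ) :
    empiricalFreq s ω m ∈ Set.Icc 0 1 := by
  refine ⟨by unfold empiricalFreq; positivity, div_le_one_of_le₀ ?_ (Nat.cast_nonneg T)⟩
  calc ∑ t, (if s t ω = m then (1 : ℝ) else 0) ≤ ∑ _t : Fin T, 1 :=
        Finset.sum_le_sum fun t _ => by split_ifs <;> norm_num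
    _ = T := by simp

variable [MeasurableSpace Ω] {μ : Measure Ω} [MeasurableSpace κ] [MeasurableSingletonClass κ]
  {s : Fin T → Ω → κ}

theorem measurable_empiricalFreq (hs : ∀ t, Measurable (s t)) (m : κ) :
    Measurable fun ω => empiricalFreq s ω m :=
  (Finset.measurable_sum _ fun t _ =>
    Measurable.ite (hs t (measurableSet_singleton m)) measurable_const measurable_const).div_const _

theorem memLp_empiricalFreq_sub [IsFiniteMeasure μ] (hs : ∀ t, Measurable (s t)) (m : κ)
    (c : ℝ) : MemLp (fun ω => empiricalFreq s ω m - c) 2 μ :=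
  (memLp_of_bounded (ae_of_all _ fun ω => empiricalFreq_mem_Icc s ω m)
    (measurable_empiricalFreq hs m).aestronglyMeasurable 2).sub (memLp_const c)

/-- The empirical frequency of a symbol is the mean of `T` pairwise independent indicators with
mean `q`, each of variance at most `1/4`. -/
theorem integral_sq_empiricalFreq_sub_le [IsProbabilityMeasure μ] (hT : 0 < T)
    (hs : ∀ t, Measurable (s t)) (hind : iIndepFun s μ) {m : κ} {q : ℝ}
    (hq : ∀ t, μ.real (s t ⁻¹' {m}) = q) :
    ∫ ω, (empiricalFreq s ω m - q) ^ 2 ∂μ ≤ 1 / (4 * T) := by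
  set g : κ → ℝ := fun x => if x = m then 1 else 0
  have hg : Measurable g :=
    Measurable.ite (measurableSet_singleton m) measurable_const measurable_const
  set X : Fin T → Ω → ℝ := fun t => g ∘ s t
  have hfreq : ∀ ω, empiricalFreq s ω m = (∑ t, X t ω) / Fintype.card (Fin T) := fun ω => by
    simp [empiricalFreq, X, g]
  have hX01 : ∀ t ω, X t ω ∈ Set.Icc (0 : ℝ) 1 := fun t ω => by
    simp only [X, g, Function.comp]; split_ifs <;> norm_num
  have hXint : ∀ t, Integrable (X t) μ := fun t =>
    (memLp_of_bounded (ae_of_all _ (hX01 t)) (hg.comp (hs t)).aestronglyMeasurable 1).integrable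
      le_rfl
  have hXmean : ∀ t, ∫ ω, X t ω ∂μ = q := fun t => by
    rw [← hq t, ← integral_indicator_one ((hs t) (measurableSet_singleton m))]
    congr 1 with ω
    by_cases h : s t ω = m <;> simp [X, g, h]
  have hmean : ∫ ω, empiricalFreq s ω m ∂μ = q := by
    simp_rw [hfreq]
    rw [integral_div, integral_finsetSum _ fun t _ => hXint t]
    simp [hXmean, hT.ne']
  have hvar := variance_mean_le_of_pairwise_indepFun (fun t => (hg.comp (hs t)).aemeasurable)
    (fun t => ae_of_all _ (hX01 t)) fun t u htu => (hind.indepFun htu).comp hg hg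
  rw [← hmean, ← variance_eq_integral (measurable_empiricalFreq hs m).aemeasurable, funext hfreq]
  convert hvar using 1
  simp; ring

theorem integrable_sum_sq_empiricalFreq_sub [Fintype κ] [IsFiniteMeasure μ]
    (hs : ∀ t, Measurable (s t)) (q : κ → ℝ) :
    Integrable (fun ω => ∑ m, (empiricalFreq s ω m - q m) ^ 2) μ :=
  integrable_finsetSum _ fun m _ => (memLp_empiricalFreq_sub hs m (q m)).integrable_sq

theorem integral_sqrt_sum_sq_empiricalFreq_sub_le [Fintype κ] [IsProbabilityMeasure μ]
    (hT : 0 < T) (hs : ∀ t, Measurable (s t)) (hind : iIndepFun s μ) {q : κ → ℝ}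
    (hq : ∀ t m, μ.real (s t ⁻¹' {m}) = q m) :
    ∫ ω, √(∑ m, (empiricalFreq s ω m - q m) ^ 2) ∂μ ≤ √(Fintype.card κ) / (2 * √T) := by
  calc ∫ ω, √(∑ m, (empiricalFreq s ω m - q m) ^ 2) ∂μ
      ≤ √(∫ ω, ∑ m, (empiricalFreq s ω m - q m) ^ 2 ∂μ) :=
        integral_sqrt_le_sqrt_integral (integrable_sum_sq_empiricalFreq_sub hs q)
          (ae_of_all _ fun ω => by positivity)
    _ ≤ √(∑ _m : κ, 1 / (4 * (T : ℝ))) := by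
        rw [integral_finsetSum _ fun m _ => (memLp_empiricalFreq_sub hs m (q m)).integrable_sq]
        exact Real.sqrt_le_sqrt <| Finset.sum_le_sum fun m _ =>
          integral_sq_empiricalFreq_sub_le hT hs hind (hq · m)
    _ = √(Fintype.card κ) / (2 * √T) := by
        rw [Finset.sum_const, Finset.card_univ, nsmul_eq_mul, mul_one_div,
          Real.sqrt_div' _ (by positivity : (0 : ℝ) ≤ 4 * T), Real.sqrt_mul' _ (Nat.cast_nonneg T),
          show (4 : ℝ) = 2 ^ 2 by norm_num, Real.sqrt_sq zero_le_two]

end EmpiricalFrequency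

theorem semantic_distortion_gap_general
    {Ω : Type*} [MeasurableSpace Ω] (μ : Measure Ω) [IsProbabilityMeasure μ]
    (M N T : ℕ) (hT : 1 ≤ T)
    (C : Matrix (Fin M) (Fin M) ℝ) (U : Matrix (Fin M) (Fin N) ℝ)
    (hC0 : ∀ i j, 0 ≤ C i j) (hC1 : ∀ j, ∑ i, C i j = 1)
    (hU0 : ∀ i j, 0 ≤ U i j) (hU1 : ∀ j, ∑ i, U i j = 1)
    (A : Matrix (Fin M) (Fin N) ℝ) (hA : A = C * U)
    (hrank : A.rank = N)
    (σ : ℝ) (hσ : 0 < σ)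
    (hσmin : ∀ x : Fin N → ℝ,
      σ * Real.sqrt (∑ n, (x n) ^ 2) ≤ Real.sqrt (∑ m, (A.mulVec x m) ^ 2))
    (d : Fin N → Fin N → ℝ) (dmax : ℝ)
    (hd0 : ∀ w wh, 0 ≤ d w wh) (hd1 : ∀ w wh, d w wh ≤ dmax)
    (p : Fin N → ℝ) (hp0 : ∀ n, 0 ≤ p n)
    (s : Fin T → Ω → Fin M)
    (hmeas : ∀ t, Measurable (s t))
    (hdist : ∀ t m, μ {ω | s t ω = m} = ENNReal.ofReal (A.mulVec p m))
    (hindep : iIndepFun s μ)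
    (phat : Ω → Fin N → ℝ)
    (hphat : ∀ ω, phat ω = ((A.transpose * A)⁻¹ * A.transpose).mulVec
      (fun m => (∑ t, if s t ω = m then (1 : ℝ) else 0) / T))
    -- Bayes decoder: V r ŝ minimizes the posterior expected distortion
    -- ψ_r(ŵ, ŝ) = ∑_w r(w) p(ŝ|w) d(w, ŵ) under prior r, where p(ŝ|w) = A ŝ w.
    (V : (Fin N → ℝ) → Fin M → Fin N)
    (hV : ∀ (r : Fin N → ℝ) (sh : Fin M) (wh : Fin N),
      ∑ w, r w * A sh w * d w (V r sh) ≤ ∑ w, r w * A sh w * d w wh)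
    -- D r: expected distortion of the decoder designed for prior r,
    -- evaluated under the true prior p.
    (D : (Fin N → ℝ) → ℝ)
    (hD : ∀ r, D r = ∑ sh, ∑ w, p w * A sh w * d w (V r sh)) :
    ∫ ω, (D (phat ω) - D p) ∂μ
      ≤ dmax * Real.sqrt (N * M) / (σ * Real.sqrt T) := by
  rcases N.eq_zero_or_pos with rfl | hN
  · simp [hD]
  have hdmax : 0 ≤ dmax := (hd0 ⟨0, hN⟩ ⟨0, hN⟩).trans (hd1 _ _)
  have hA0 : ∀ i j, 0 ≤ A i j := hA ▸ mul_apply_nonneg hC0 hU0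
  have hA1 : ∀ j, ∑ i, A i j = 1 := hA ▸ sum_mul_apply_eq_one hC1 hU1
  have hG : IsUnit (Aᵀ * A) :=
    isUnit_transpose_mul_self_of_rank_eq_card (by rw [hrank, Fintype.card_fin])
  have hq : ∀ t m, μ.real (s t ⁻¹' {m}) = (A *ᵥ p) m := fun t m => by
    rw [measureReal_def, ← ENNReal.toReal_ofReal (mulVec_nonneg hA0 hp0 m), ← hdist t m]
    rfl
  set err := fun ω => √(∑ m, (empiricalFreq s ω m - (A *ᵥ p) m) ^ 2)
  have hpoint : ∀ ω, D (phat ω) - D p ≤ dmax * √N / σ * err ω := fun ω => by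
    have h := expectedDistortion_pinv_sub_le hA0 hA1 hG hσ hσmin hd0 hd1 hdmax hV p
      (empiricalFreq s ω)
    rw [Fintype.card_fin] at h
    rw [hD, hD, hphat ω]
    exact h
  have hRHS : 0 ≤ dmax * √(N * M) / (σ * √T) := by positivity
  by_cases hint : Integrable (fun ω => D (phat ω) - D p) μ
  swap
  · rw [integral_undef hint]; exact hRHS
  calc ∫ ω, (D (phat ω) - D p) ∂μ ≤ ∫ ω, dmax * √N / σ * err ω ∂μ :=
        integral_mono hint ((integrable_sum_sq_empiricalFreq_sub hmeas _).sqrt.const_mul _) hpoint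
    _ = dmax * √N / σ * ∫ ω, err ω ∂μ := integral_const_mul _ _
    _ ≤ dmax * √N / σ * (√(Fintype.card (Fin M)) / (2 * √T)) := by
        gcongr
        exact integral_sqrt_sum_sq_empiricalFreq_sub_le hT hmeas hindep hq
    -- the decoding lemma gives `d_max ‖p̂_T - p‖₁`, half of the `2 d_max ‖p̂_T - p‖₁` allowed for
    _ = dmax * √(N * M) / (σ * √T) / 2 := by
        rw [Fintype.card_fin, Real.sqrt_mul (Nat.cast_nonneg N)]
        field_simp
    _ ≤ dmax * √(N * M) / (σ * √T) := half_le_self hRHS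

/-- Theorem 3 (semantic distortion gap): under the setup of Theorems 2 and 3,
with a bounded distortion d ≤ d_max, effective transmission matrix A = CU of
full column rank and smallest singular value σ > 0, learned prior
p̂_T = A†q̂_T from T i.i.d. observations drawn from q = Ap, and Bayes decoders
V r minimizing the expected posterior distortion under prior r, the expected
distortion gap of the mismatched decoder satisfies
E[D_{p̂_T} - D_p] ≤ d_max √(NM) / (σ√T). -/
theorem semantic_distortion_gap
    {Ω : Type*} [MeasurableSpace Ω] (μ : Measure Ω) [IsProbabilityMeasure μ]
    (M N T : ℕ) (hT : 1 ≤ T)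
    (C : Matrix (Fin M) (Fin M) ℝ) (U : Matrix (Fin M) (Fin N) ℝ)
    (hC0 : ∀ i j, 0 ≤ C i j) (hC1 : ∀ j, ∑ i, C i j = 1)
    (hU0 : ∀ i j, 0 ≤ U i j) (hU1 : ∀ j, ∑ i, U i j = 1)
    (A : Matrix (Fin M) (Fin N) ℝ) (hA : A = C * U)
    (hrank : A.rank = N)
    (σ : ℝ) (hσ : 0 < σ)
    (hσmin : ∀ x : Fin N → ℝ,
      σ * Real.sqrt (∑ n, (x n) ^ 2) ≤ Real.sqrt (∑ m, (A.mulVec x m) ^ 2))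
    (d : Fin N → Fin N → ℝ) (dmax : ℝ)
    (hd0 : ∀ w wh, 0 ≤ d w wh) (hd1 : ∀ w wh, d w wh ≤ dmax)
    (p : Fin N → ℝ) (hp0 : ∀ n, 0 ≤ p n) (hp1 : ∑ n, p n = 1)
    (s : Fin T → Ω → Fin M)
    (hmeas : ∀ t, Measurable (s t))
    (hdist : ∀ t m, μ {ω | s t ω = m} = ENNReal.ofReal (A.mulVec p m))
    (hindep : iIndepFun s μ)
    (phat : Ω → Fin N → ℝ)
    (hphat : ∀ ω, phat ω = ((A.transpose * A)⁻¹ * A.transpose).mulVec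
      (fun m => (∑ t, if s t ω = m then (1 : ℝ) else 0) / T))
    -- Bayes decoder: V r ŝ minimizes the posterior expected distortion
    -- ψ_r(ŵ, ŝ) = ∑_w r(w) p(ŝ|w) d(w, ŵ) under prior r, where p(ŝ|w) = A ŝ w.
    (V : (Fin N → ℝ) → Fin M → Fin N)
    (hV : ∀ (r : Fin N → ℝ) (sh : Fin M) (wh : Fin N),
      ∑ w, r w * A sh w * d w (V r sh) ≤ ∑ w, r w * A sh w * d w wh)
    -- D r: expected distortion of the decoder designed for prior r,
    -- evaluated under the true prior p.
    (D : (Fin N → ℝ) → ℝ)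
    (hD : ∀ r, D r = ∑ sh, ∑ w, p w * A sh w * d w (V r sh)) :
    ∫ ω, (D (phat ω) - D p) ∂μ
      ≤ dmax * Real.sqrt (N * M) / (σ * Real.sqrt T) :=
  semantic_distortion_gap_general μ M N T hT C U hC0 hC1 hU0 hU1 A hA hrank σ hσ hσmin d dmax hd0
    hd1 p hp0 s hmeas hdist hindep phat hphat V hV D hD
end
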